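/- arXiv:2005.07835 — 2 statements merged into one kernel-verified Lean document; each statement's English description precedes it below -/
import Mathlib

section
/- Let k ≥ 3 and let F be a connected k-uniform hypergraph with at least one edge, and let G be the double incidence graph of F. Then γ_k(G) = γ(G) + k − 2 if and only if tc(F) = |V(F)| − k + 2. -/
/-- `D` is a `k`-dominating set of `G`: every vertex outside `D` has
at least `k` neighbors in `D`. -/
def IsKDomSet {V : Type*} (G : SimpleGraph V) (k : ℕ) (D : Set V) : Prop :=
  ∀ v ∉ D, k ≤ (G.neighborSet v ∩ D).ncard

/-- The `k`-domination number: minimum cardinality of a `k`-dominating set. -/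
noncomputable def kdomNum {V : Type*} (G : SimpleGraph V) (k : ℕ) : ℕ :=
  sInf {n | ∃ D : Set V, IsKDomSet G k D ∧ D.ncard = n}

/-- Two vertices of a hypergraph are adjacent when some edge contains both. -/
def HyperAdj {V : Type*} (E : Finset (Finset V)) (u v : V) : Prop :=
  ∃ e ∈ E, u ∈ e ∧ v ∈ e

/-- A hypergraph is connected if any two vertices are joined by a sequence of
consecutively adjacent vertices. -/
def HyperConnected {V : Type*} (E : Finset (Finset V)) : Prop :=
  ∀ u v : V, Relation.ReflTransGen (HyperAdj E) u v

/-- The double incidence graph of a hypergraph with vertex type `V` and edge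
family `E`: a bipartite graph on `V ⊕ (E × Bool)` in which `(e, j)` is
adjacent to `v : V` iff `v ∈ e`, and there are no other edges. -/
def doubleIncidence {V : Type*} (E : Finset (Finset V)) :
    SimpleGraph (V ⊕ ({e // e ∈ E} × Bool)) :=
  SimpleGraph.fromRel fun a b =>
    ∃ (v : V) (e : {e // e ∈ E}) (j : Bool),
      a = Sum.inl v ∧ b = Sum.inr (e, j) ∧ v ∈ e.1

/-- `(T, R)` is a TC-set of the hypergraph with edge family `E`:
`T` is a transversal (meets every edge) and the edges in `R ⊆ E`
together cover every vertex outside `T`. -/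
def IsTCSet {V : Type*} [DecidableEq V] (E : Finset (Finset V))
    (T : Finset V) (R : Finset (Finset V)) : Prop :=
  (∀ e ∈ E, (e ∩ T).Nonempty) ∧ R ⊆ E ∧ ∀ v : V, v ∉ T → ∃ e ∈ R, v ∈ e

/-- The TC-number: the minimum of `|T| + |R|` over all TC-sets `(T, R)`. -/
noncomputable def tcNum {V : Type*} [DecidableEq V] (E : Finset (Finset V)) : ℕ :=
  sInf {n | ∃ T R, IsTCSet E T R ∧ T.card + R.card = n}

/-!
The double incidence graph `G` has both domination numbers in closed form. The vertex set `V`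
is `k`-dominating, and no `k`-dominating set `D` is smaller: each vertex of `V` outside `D` has
at least `k` neighbours among the edge copies in `D`, while each copy has only `k` neighbours,
so `D` contains at least as many copies as it misses vertices. Hence `γ_k(G) = |V|`.
A TC-set `(T, R)` yields the dominating set `T` plus one copy of each edge of `R`; conversely,
from a dominating set `D` take for `R` the edges with a copy in `D`, and add to `D ∩ V` one
vertex of each edge having both copies in `D`. Hence `γ(G) = tc(F)`, and the equivalence is
arithmetic since `k ≤ |V|`.
-/

open Finset Sum

section DoubleIncidence

variable {V : Type*} {E : Finset (Finset V)}

theorem doubleIncidence_adj_inl_inr {v : V} {p : {e // e ∈ E} × Bool} :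
    (doubleIncidence E).Adj (inl v) (inr p) ↔ v ∈ p.1.1 := by
  obtain ⟨⟨e, he⟩, j⟩ := p
  cases j <;> simp [doubleIncidence, he]

theorem doubleIncidence_not_adj_inl_inl (u v : V) :
    ¬ (doubleIncidence E).Adj (inl u) (inl v) := by
  simp [doubleIncidence]

theorem doubleIncidence_not_adj_inr_inr (p q : {e // e ∈ E} × Bool) :
    ¬ (doubleIncidence E).Adj (inr p) (inr q) := by
  simp [doubleIncidence]

variable [DecidableEq V]

theorem ncard_doubleIncidence_neighborSet_inl_inter (v : V)
    (D : Finset (V ⊕ ({e // e ∈ E} × Bool))) :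
    ((doubleIncidence E).neighborSet (inl v) ∩ D).ncard = #{p ∈ D.toRight | v ∈ p.1.1} := by
  rw [← card_map (Function.Embedding.inr), ← Set.ncard_coe_finset]
  congr 1
  ext (u | p) <;> simp [doubleIncidence_not_adj_inl_inl, doubleIncidence_adj_inl_inr, and_comm]

theorem ncard_doubleIncidence_neighborSet_inr_inter (p : {e // e ∈ E} × Bool)
    (D : Finset (V ⊕ ({e // e ∈ E} × Bool))) :
    ((doubleIncidence E).neighborSet (inr p) ∩ D).ncard = #{v ∈ p.1.1 | v ∈ D.toLeft} := by
  rw [← card_map (Function.Embedding.inl), ← Set.ncard_coe_finset]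
  congr 1
  ext (u | q) <;> simp [doubleIncidence_not_adj_inr_inr, (doubleIncidence E).adj_comm (inr p),
    doubleIncidence_adj_inl_inr]

theorem isKDomSet_doubleIncidence_iff {k : ℕ} {D : Finset (V ⊕ ({e // e ∈ E} × Bool))} :
    IsKDomSet (doubleIncidence E) k D ↔
      (∀ v ∉ D.toLeft, k ≤ #{p ∈ D.toRight | v ∈ p.1.1}) ∧
        ∀ p ∉ D.toRight, k ≤ #{v ∈ p.1.1 | v ∈ D.toLeft} := by
  simp only [IsKDomSet, Sum.forall, ncard_doubleIncidence_neighborSet_inl_inter,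
    ncard_doubleIncidence_neighborSet_inr_inter, mem_coe, mem_toLeft, mem_toRight]

end DoubleIncidence

theorem kdomNum_le_ncard {α : Type*} {G : SimpleGraph α} {k : ℕ} {D : Set α}
    (hD : IsKDomSet G k D) : kdomNum G k ≤ D.ncard := by
  unfold kdomNum
  exact Nat.sInf_le ⟨D, hD, rfl⟩

theorem exists_isKDomSet_ncard_eq_kdomNum {α : Type*} (G : SimpleGraph α) (k : ℕ) :
    ∃ D, IsKDomSet G k D ∧ D.ncard = kdomNum G k := by
  have hne : {n | ∃ D : Set α, IsKDomSet G k D ∧ D.ncard = n}.Nonempty :=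
    ⟨_, Set.univ, fun _ hv => absurd (Set.mem_univ _) hv, rfl⟩
  exact Nat.sInf_mem hne

section TC

variable {V : Type*} [DecidableEq V] {E : Finset (Finset V)}

theorem tcNum_le {T : Finset V} {R : Finset (Finset V)} (h : IsTCSet E T R) :
    tcNum E ≤ #T + #R := by
  unfold tcNum
  exact Nat.sInf_le ⟨T, R, h, rfl⟩

theorem exists_isTCSet_card_eq_tcNum [Fintype V] (hE : ∀ e ∈ E, e.Nonempty) :
    ∃ T R, IsTCSet E T R ∧ #T + #R = tcNum E := by
  have hne : {n | ∃ T R, IsTCSet E T R ∧ #T + #R = n}.Nonempty :=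
    ⟨_, univ, ∅, ⟨by simpa using hE, empty_subset _, by simp⟩, rfl⟩
  exact Nat.sInf_mem hne

end TC

theorem Finset.exists_card_le_forall_inter_nonempty {ι V : Type*} [DecidableEq V]
    (s : Finset ι) (f : ι → Finset V) (hf : ∀ i ∈ s, (f i).Nonempty) :
    ∃ T : Finset V, #T ≤ #s ∧ ∀ i ∈ s, (f i ∩ T).Nonempty := by
  choose g hg using hf
  refine ⟨s.attach.image fun i => g i.1 i.2, card_image_le.trans (card_attach).le, ?_⟩
  intro i hi
  exact ⟨g i hi, mem_inter.2 ⟨hg i hi, mem_image.2 ⟨⟨i, hi⟩, mem_attach _ _, rfl⟩⟩⟩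

section Domination

variable {V : Type*} [Fintype V] [DecidableEq V] {E : Finset (Finset V)}

theorem isKDomSet_doubleIncidence_univ_disjSum_empty {k : ℕ} (huni : ∀ e ∈ E, e.card = k) :
    IsKDomSet (doubleIncidence E) k
      ↑((univ : Finset V).disjSum (∅ : Finset ({e // e ∈ E} × Bool))) := by
  refine isKDomSet_doubleIncidence_iff.2 ⟨by simp, fun p _ => ?_⟩
  simp [huni _ p.1.2]

theorem card_le_card_of_isKDomSet_doubleIncidence {k : ℕ} (hk : 0 < k)
    (hE : ∀ e ∈ E, e.card ≤ k) {D : Finset (V ⊕ ({e // e ∈ E} × Bool))}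
    (hD : IsKDomSet (doubleIncidence E) k D) : Fintype.card V ≤ #D := by
  obtain ⟨hleft, -⟩ := isKDomSet_doubleIncidence_iff.1 hD
  have hcount : #D.toLeftᶜ * k ≤ #D.toRight * k :=
    card_mul_le_card_mul (fun (v : V) (p : {e // e ∈ E} × Bool) => v ∈ p.1.1)
      (fun v hv => hleft v (mem_compl.1 hv)) fun p _ =>
        (card_le_card fun _ hv => (mem_filter.1 hv).2).trans (hE _ p.1.2)
  have := Nat.le_of_mul_le_mul_right hcount hk
  rw [card_compl] at this
  rw [← card_toLeft_add_card_toRight]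
  omega

theorem kdomNum_doubleIncidence_eq_card {k : ℕ} (hk : 0 < k) (huni : ∀ e ∈ E, e.card = k) :
    kdomNum (doubleIncidence E) k = Fintype.card V := by
  refine le_antisymm ?_ ?_
  · have := kdomNum_le_ncard (isKDomSet_doubleIncidence_univ_disjSum_empty huni)
    rwa [Set.ncard_coe_finset, card_disjSum, card_univ, card_empty, add_zero] at this
  · obtain ⟨D, hD, hcard⟩ := exists_isKDomSet_ncard_eq_kdomNum (doubleIncidence E) k
    lift D to Finset (V ⊕ ({e // e ∈ E} × Bool)) using D.toFinite
    rw [← hcard, Set.ncard_coe_finset]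
    exact card_le_card_of_isKDomSet_doubleIncidence hk (fun e he => (huni e he).le) hD

end Domination

theorem Finset.card_eq_card_true_add_card_false {α : Type*} [Fintype α] [DecidableEq α]
    (C : Finset (α × Bool)) : #C = #{a | (a, true) ∈ C} + #{a | (a, false) ∈ C} := by
  have hfiber (j : Bool) : #{a | (a, j) ∈ C} = #{p ∈ C | p.2 = j} := by
    rw [← card_map (Function.Embedding.sectL α j)]
    congr 1
    ext ⟨a, b⟩
    simp only [mem_map, mem_filter, mem_univ, true_and, Function.Embedding.sectL_apply,
      Prod.mk.injEq]
    aesop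
  rw [card_eq_sum_card_fiberwise (f := Prod.snd) (t := univ) fun _ _ => mem_univ _,
    Fintype.sum_bool, hfiber, hfiber]

section TransversalCover

variable {V : Type*} [DecidableEq V] {E : Finset (Finset V)}

theorem isKDomSet_one_doubleIncidence_of_isTCSet {T : Finset V} {R : Finset (Finset V)}
    (h : IsTCSet E T R) :
    IsKDomSet (doubleIncidence E) 1
      ↑(T.disjSum ((R.subtype (· ∈ E)).map (Function.Embedding.sectL _ true))) := by
  obtain ⟨htrans, hRE, hcov⟩ := h
  refine isKDomSet_doubleIncidence_iff.2 ⟨fun v hv => ?_, fun p _ => ?_⟩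
  · rw [toLeft_disjSum] at hv
    obtain ⟨e, heR, hve⟩ := hcov v hv
    exact one_le_card.2 ⟨(⟨e, hRE heR⟩, true), by simp [heR, hve]⟩
  · obtain ⟨v, hv⟩ := htrans p.1.1 p.1.2
    exact one_le_card.2 ⟨v, by simpa using hv⟩

theorem kdomNum_doubleIncidence_one_le_tcNum [Fintype V] (hE : ∀ e ∈ E, e.Nonempty) :
    kdomNum (doubleIncidence E) 1 ≤ tcNum E := by
  obtain ⟨T, R, h, hcard⟩ := exists_isTCSet_card_eq_tcNum hE
  have hR : #(R.subtype (· ∈ E)) = #R := by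
    rw [card_subtype, filter_true_of_mem fun _ he => h.2.1 he]
  calc kdomNum _ 1 ≤ _ := kdomNum_le_ncard (isKDomSet_one_doubleIncidence_of_isTCSet h)
    _ = tcNum E := by rw [Set.ncard_coe_finset, card_disjSum, card_map, hR, hcard]

theorem exists_isTCSet_card_add_card_le_of_isKDomSet (hE : ∀ e ∈ E, e.Nonempty)
    {D : Finset (V ⊕ ({e // e ∈ E} × Bool))} (hD : IsKDomSet (doubleIncidence E) 1 D) :
    ∃ T R, IsTCSet E T R ∧ #T + #R ≤ #D := by
  obtain ⟨hleft, hright⟩ := isKDomSet_doubleIncidence_iff.1 hD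
  set S : Bool → Finset {e // e ∈ E} := fun j => {e | (e, j) ∈ D.toRight}
  obtain ⟨T₁, hT₁, hT₁meet⟩ := (S true ∩ S false).exists_card_le_forall_inter_nonempty
    Subtype.val fun e _ => hE e.1 e.2
  refine ⟨D.toLeft ∪ T₁, (S true ∪ S false).map (Function.Embedding.subtype _),
    ⟨fun e he => ?_, fun e he => ?_, fun v hv => ?_⟩, ?_⟩
  · by_cases hboth : ⟨e, he⟩ ∈ S true ∩ S false
    · exact (hT₁meet _ hboth).mono (inter_subset_inter_left subset_union_right)
    · obtain ⟨j, hj⟩ : ∃ j, (⟨e, he⟩, j) ∉ D.toRight := by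
        by_contra! h
        exact hboth (mem_inter.2 ⟨mem_filter.2 ⟨mem_univ _, h true⟩,
          mem_filter.2 ⟨mem_univ _, h false⟩⟩)
      obtain ⟨v, hv⟩ := card_pos.1 (hright _ hj)
      exact ⟨v, by simp_all⟩
  · obtain ⟨e, -, rfl⟩ := mem_map.1 he
    exact e.2
  · obtain ⟨⟨e, j⟩, hp⟩ := card_pos.1 (hleft v fun h => hv (mem_union_left _ h))
    rw [mem_filter, mem_toRight] at hp
    refine ⟨e.1, mem_map_of_mem _ ?_, hp.2⟩
    cases j <;> simp [S, hp.1]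
  · calc #(D.toLeft ∪ T₁) + #((S true ∪ S false).map (Function.Embedding.subtype _))
        ≤ #D.toLeft + #(S true ∩ S false) + #(S true ∪ S false) := by
          rw [card_map]; gcongr; exact (card_union_le _ _).trans (by gcongr)
      _ = #D.toLeft + #D.toRight := by
          rw [add_assoc, add_comm (#(_ ∩ _)), card_union_add_card_inter,
            card_eq_card_true_add_card_false D.toRight]
      _ = #D := card_toLeft_add_card_toRight

theorem tcNum_le_kdomNum_doubleIncidence_one [Fintype V] (hE : ∀ e ∈ E, e.Nonempty) :
    tcNum E ≤ kdomNum (doubleIncidence E) 1 := by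
  obtain ⟨D, hD, hcard⟩ := exists_isKDomSet_ncard_eq_kdomNum (doubleIncidence E) 1
  lift D to Finset (V ⊕ ({e // e ∈ E} × Bool)) using D.toFinite
  obtain ⟨T, R, h, hTR⟩ := exists_isTCSet_card_add_card_le_of_isKDomSet hE hD
  rw [← hcard, Set.ncard_coe_finset]
  exact (tcNum_le h).trans hTR

theorem kdomNum_doubleIncidence_one_eq_tcNum [Fintype V] (hE : ∀ e ∈ E, e.Nonempty) :
    kdomNum (doubleIncidence E) 1 = tcNum E :=
  le_antisymm (kdomNum_doubleIncidence_one_le_tcNum hE) (tcNum_le_kdomNum_doubleIncidence_one hE)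

end TransversalCover

theorem statement13_general {V : Type*} [Fintype V] [DecidableEq V] (E : Finset (Finset V))
    (k : ℕ) (hk : 3 ≤ k) (huni : ∀ e ∈ E, e.card = k) (hne : E.Nonempty) :
    kdomNum (doubleIncidence E) k = kdomNum (doubleIncidence E) 1 + (k - 2) ↔
      tcNum E = Fintype.card V - k + 2 := by
  have hkV : k ≤ Fintype.card V := by
    obtain ⟨e, he⟩ := hne
    exact huni e he ▸ card_le_univ e
  have hE : ∀ e ∈ E, e.Nonempty := fun e he => card_pos.1 (by rw [huni e he]; omega)
  rw [kdomNum_doubleIncidence_eq_card (by omega) huni, kdomNum_doubleIncidence_one_eq_tcNum hE]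
  omega

/-- Let `k ≥ 3` and let `F` be a connected `k`-uniform hypergraph with at
least one edge, and let `G` be its double incidence graph. Then
`γ_k(G) = γ(G) + k − 2` if and only if `tc(F) = |V(F)| − k + 2`. -/
theorem statement13 {V : Type*} [Fintype V] [DecidableEq V] (E : Finset (Finset V))
    (k : ℕ) (hk : 3 ≤ k) (huni : ∀ e ∈ E, e.card = k) (hne : E.Nonempty)
    (hconn : HyperConnected E) :
    kdomNum (doubleIncidence E) k = kdomNum (doubleIncidence E) 1 + (k - 2) ↔
      tcNum E = Fintype.card V - k + 2 :=
  statement13_general E k hk huni hne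
end

section
/- For all integers k ≥ 2, r ≥ 1 and i_1, …, i_r with each i_j ≥ k, the graph G = S_k(i_1, …, i_r) satisfies γ_k(G) = r + k − 1 and γ(G) = r + 1; in particular γ_k(G) = γ(G) + k − 2. -/
/-- The graph `S_k(i_1, …, i_r)`: its vertices are `k − 1` "center" vertices
`c_1, …, c_{k−1}`, the vertices `v_1, …, v_r`, and vertices `x_{j,m}` for
`1 ≤ j ≤ r`, `1 ≤ m ≤ i_j`; each `x_{j,m}` is adjacent exactly to `v_j` and
to all the centers, and there are no other edges. -/
def SGraph (k r : ℕ) (i : Fin r → ℕ) :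
    SimpleGraph (Fin (k - 1) ⊕ (Fin r ⊕ (Σ j : Fin r, Fin (i j)))) :=
  SimpleGraph.fromRel fun a b =>
    ∃ (j : Fin r) (m : Fin (i j)),
      b = Sum.inr (Sum.inr ⟨j, m⟩) ∧
      (a = Sum.inr (Sum.inl j) ∨ ∃ c : Fin (k - 1), a = Sum.inl c)

open Set

theorem Set.ncard_eq_sum_ncard_inter_preimage {α ι : Type*} [Finite α] [Fintype ι]
    (f : α → ι) (s : Set α) :
    s.ncard = ∑ b, (s ∩ f ⁻¹' {b}).ncard := by
  classical
  have := Fintype.ofFinite α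
  rw [ncard_eq_toFinset_card' s,
    Finset.card_eq_sum_card_fiberwise (t := Finset.univ) (f := f) (fun _ _ => Finset.mem_univ _)]
  refine Finset.sum_congr rfl fun b _ => ?_
  rw [← ncard_coe_finset]
  congr 1
  ext a
  simp

theorem Fintype.card_sub_one_add_le_sum {ι : Type*} [Fintype ι] {f : ι → ℕ}
    (hf : ∀ j, 1 ≤ f j) {j₀ : ι} {m : ℕ} (hm : m ≤ f j₀) :
    Fintype.card ι - 1 + m ≤ ∑ j, f j := by
  classical
  rw [← Finset.add_sum_erase _ _ (Finset.mem_univ j₀), add_comm]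
  gcongr
  calc Fintype.card ι - 1 = ∑ _ ∈ Finset.univ.erase j₀, 1 := by
        simp [Finset.card_erase_of_mem]
    _ ≤ _ := Finset.sum_le_sum fun j _ => hf j

namespace IsKDomSet
variable {V : Type*} {G : SimpleGraph V} {k : ℕ} {D : Set V} {v : V}

theorem exists_adj_mem (hD : IsKDomSet G k D) (hk : k ≠ 0) (hv : v ∉ D) :
    ∃ w ∈ D, G.Adj v w := by
  obtain ⟨w, hw, hwD⟩ :=
    nonempty_of_ncard_ne_zero ((Nat.pos_of_ne_zero hk).trans_le (hD v hv)).ne'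
  exact ⟨w, hwD, hw⟩

theorem neighborSet_subset (hD : IsKDomSet G k D) (hv : v ∉ D)
    (hfin : (G.neighborSet v).Finite) (hdeg : (G.neighborSet v).ncard ≤ k) :
    G.neighborSet v ⊆ D := by
  rw [← eq_of_subset_of_ncard_le inter_subset_left (hdeg.trans (hD v hv)) hfin]
  exact inter_subset_right

end IsKDomSet

theorem isKDomSet_one_iff {V : Type*} [Finite V] {G : SimpleGraph V} {D : Set V} :
    IsKDomSet G 1 D ↔ ∀ v ∉ D, ∃ w ∈ D, G.Adj v w := by
  refine ⟨fun hD v hv => hD.exists_adj_mem one_ne_zero hv, fun h v hv => ?_⟩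
  obtain ⟨w, hwD, hw⟩ := h v hv
  exact (ncard_pos (toFinite (G.neighborSet v ∩ D))).2 ⟨w, hw, hwD⟩

theorem kdomNum_eq_of_isKDomSet {V : Type*} {G : SimpleGraph V} {k n : ℕ} {D : Set V}
    (hD : IsKDomSet G k D) (hn : D.ncard = n)
    (hmin : ∀ D', IsKDomSet G k D' → n ≤ D'.ncard) : kdomNum G k = n :=
  le_antisymm (Nat.sInf_le ⟨D, hD, hn⟩)
    (le_csInf ⟨_, D, hD, hn⟩ fun _ ⟨D', hD', h⟩ => h ▸ hmin D' hD')

namespace SGraph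
variable {k r : ℕ} {i : Fin r → ℕ}

abbrev Vert (k r : ℕ) (i : Fin r → ℕ) := Fin (k - 1) ⊕ (Fin r ⊕ (Σ j : Fin r, Fin (i j)))

theorem neighborSet_inr_inr (j : Fin r) (m : Fin (i j)) :
    (SGraph k r i).neighborSet (Sum.inr (Sum.inr ⟨j, m⟩)) =
      insert (Sum.inr (Sum.inl j)) (range (Sum.inl : Fin (k - 1) → Vert k r i)) := by
  ext (c | j' | ⟨j', m'⟩) <;> simp [SGraph, eq_comm]
  rintro rfl; exact ⟨m, .rfl⟩

theorem neighborSet_inr_inl (j : Fin r) :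
    (SGraph k r i).neighborSet (Sum.inr (Sum.inl j)) =
      range (fun m : Fin (i j) => (Sum.inr (Sum.inr ⟨j, m⟩) : Vert k r i)) := by
  ext (c | j' | ⟨j', m'⟩) <;> simp [SGraph, eq_comm]
  rintro rfl; exact ⟨fun _ => ⟨m', .rfl⟩, fun _ => ⟨m', .rfl⟩⟩

theorem neighborSet_inl (c : Fin (k - 1)) :
    (SGraph k r i).neighborSet (Sum.inl c) =
      range (fun p : Σ j : Fin r, Fin (i j) => (Sum.inr (Sum.inr p) : Vert k r i)) := by
  ext (c | j' | ⟨j', m'⟩) <;> simp [SGraph]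

/-- The index `j` of the star `{v_j} ∪ {x_{j,m}}` containing a vertex, or `none` at a center. -/
def block : Vert k r i → Option (Fin r) :=
  Sum.elim (fun _ => none) (Sum.elim some fun p => some p.1)

theorem block_preimage_none :
    block ⁻¹' {none} = range (Sum.inl : Fin (k - 1) → Vert k r i) := by
  ext (c | j | p) <;> simp [block]

theorem ncard_eq_centers_add_sum_blocks (D : Set (Vert k r i)) :
    D.ncard = (D ∩ range Sum.inl).ncard + ∑ j, (D ∩ block ⁻¹' {some j}).ncard := by
  rw [ncard_eq_sum_ncard_inter_preimage block, Fintype.sum_option, block_preimage_none]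

theorem one_le_ncard_inter_block {n : ℕ} {D : Set (Vert k r i)}
    (hD : IsKDomSet (SGraph k r i) n D) (hn : n ≠ 0) (j : Fin r) :
    1 ≤ (D ∩ block ⁻¹' {some j}).ncard := by
  rw [Nat.one_le_iff_ne_zero, Ne, ncard_eq_zero, ← ne_eq, ← nonempty_iff_ne_empty]
  by_cases hv : Sum.inr (Sum.inl j) ∈ D
  · exact ⟨_, hv, rfl⟩
  · obtain ⟨w, hwD, hw⟩ := hD.exists_adj_mem hn hv
    rw [← SimpleGraph.mem_neighborSet, neighborSet_inr_inl] at hw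
    obtain ⟨m, rfl⟩ := hw
    exact ⟨_, hwD, rfl⟩

theorem ncard_centers : (range (Sum.inl : Fin (k - 1) → Vert k r i)).ncard = k - 1 := by
  rw [ncard_range_of_injective Sum.inl_injective, Nat.card_eq_fintype_card, Fintype.card_fin]

theorem ncard_neighborSet_inr_inr (hk : 1 ≤ k) (j : Fin r) (m : Fin (i j)) :
    ((SGraph k r i).neighborSet (Sum.inr (Sum.inr ⟨j, m⟩))).ncard = k := by
  rw [neighborSet_inr_inr, ncard_insert_of_notMem (by simp), ncard_centers]
  omega

theorem isKDomSet_centers_union_hubs (hk : 1 ≤ k) :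
    IsKDomSet (SGraph k r i) k (range Sum.inl ∪ range fun j => Sum.inr (Sum.inl j)) := by
  rintro (c | j | ⟨j, m⟩) hv
  · exact absurd (Or.inl ⟨c, rfl⟩) hv
  · exact absurd (Or.inr ⟨j, rfl⟩) hv
  · have hsub : (SGraph k r i).neighborSet (Sum.inr (Sum.inr ⟨j, m⟩)) ⊆
        range Sum.inl ∪ range fun j => Sum.inr (Sum.inl j) := by
      rw [neighborSet_inr_inr]
      rintro _ (rfl | ⟨c, rfl⟩)
      exacts [Or.inr ⟨j, rfl⟩, Or.inl ⟨c, rfl⟩]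
    rw [inter_eq_left.2 hsub, ncard_neighborSet_inr_inr hk]

theorem ncard_centers_union_hubs (hk : 1 ≤ k) :
    (range Sum.inl ∪ range fun j => (Sum.inr (Sum.inl j) : Vert k r i)).ncard = r + k - 1 := by
  rw [ncard_union_eq (by simp [disjoint_left]), ncard_centers,
    ncard_range_of_injective (by intro a b h; simpa using h)]
  simp
  omega

theorem add_sub_one_le_ncard_of_isKDomSet (hk : 2 ≤ k) (hr : 1 ≤ r) (hi : ∀ j, k ≤ i j)
    {D : Set (Vert k r i)} (hD : IsKDomSet (SGraph k r i) k D) : r + k - 1 ≤ D.ncard := by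
  have hblocks := one_le_ncard_inter_block hD (by omega)
  rw [ncard_eq_centers_add_sum_blocks]
  by_cases hx : ∀ p, (Sum.inr (Sum.inr p) : Vert k r i) ∈ D
  · let j₀ : Fin r := ⟨0, hr⟩
    have hj₀ : k ≤ (D ∩ block ⁻¹' {some j₀}).ncard :=
      calc k ≤ i j₀ := hi j₀
        _ = (range fun m => (Sum.inr (Sum.inr ⟨j₀, m⟩) : Vert k r i)).ncard := by
          rw [ncard_range_of_injective (by intro a b h; simpa using h)]; simp
        _ ≤ _ := ncard_le_ncard (by rintro _ ⟨m, rfl⟩; exact ⟨hx _, rfl⟩)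
    have := Fintype.card_sub_one_add_le_sum hblocks hj₀
    simp only [Fintype.card_fin] at this
    omega
  · push Not at hx
    obtain ⟨⟨j, m⟩, hm⟩ := hx
    have hC : range Sum.inl ⊆ D := (subset_insert _ _).trans <| neighborSet_inr_inr j m ▸
      hD.neighborSet_subset hm (toFinite _) (ncard_neighborSet_inr_inr (by omega) j m).le
    have := Fintype.card_sub_one_add_le_sum hblocks (hblocks j)
    rw [inter_eq_right.2 hC, ncard_centers]
    simp only [Fintype.card_fin] at this
    omega

theorem kdomNum_self_eq (hk : 2 ≤ k) (hr : 1 ≤ r) (hi : ∀ j, k ≤ i j) :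
    kdomNum (SGraph k r i) k = r + k - 1 :=
  kdomNum_eq_of_isKDomSet (isKDomSet_centers_union_hubs (by omega))
    (ncard_centers_union_hubs (by omega))
    fun _ hD => add_sub_one_le_ncard_of_isKDomSet hk hr hi hD

theorem isKDomSet_one_insert_hubs (hr : 1 ≤ r) (hi : 1 ≤ i ⟨0, hr⟩) :
    IsKDomSet (SGraph k r i) 1
      (insert (Sum.inr (Sum.inr ⟨⟨0, hr⟩, ⟨0, hi⟩⟩))
        (range fun j => Sum.inr (Sum.inl j))) := by
  refine isKDomSet_one_iff.2 ?_
  rintro (c | j | ⟨j, m⟩) hv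
  · refine ⟨_, mem_insert _ _, ?_⟩
    rw [← SimpleGraph.mem_neighborSet, neighborSet_inl]
    exact mem_range_self _
  · exact absurd (mem_insert_of_mem _ (mem_range_self j)) hv
  · refine ⟨_, mem_insert_of_mem _ (mem_range_self j), ?_⟩
    rw [← SimpleGraph.mem_neighborSet, neighborSet_inr_inr]
    exact mem_insert _ _

theorem ncard_insert_hubs (hr : 1 ≤ r) (hi : 1 ≤ i ⟨0, hr⟩) :
    (insert (Sum.inr (Sum.inr ⟨⟨0, hr⟩, ⟨0, hi⟩⟩))
      (range fun j => (Sum.inr (Sum.inl j) : Vert k r i))).ncard = r + 1 := by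
  rw [ncard_insert_of_notMem (by simp), ncard_range_of_injective (by intro a b h; simpa using h)]
  simp

theorem exists_two_le_ncard_inter_block (hk : 2 ≤ k) (hi : ∀ j, 2 ≤ i j)
    {D : Set (Vert k r i)} (hD : IsKDomSet (SGraph k r i) 1 D) (hC : D ∩ range Sum.inl = ∅) :
    ∃ j, 2 ≤ (D ∩ block ⁻¹' {some j}).ncard := by
  have hCD : ∀ c, (Sum.inl c : Vert k r i) ∉ D := fun c hc => hC.subset ⟨hc, c, rfl⟩
  obtain ⟨_, hxD, hx⟩ := hD.exists_adj_mem one_ne_zero (hCD ⟨0, by omega⟩)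
  rw [← SimpleGraph.mem_neighborSet, neighborSet_inl] at hx
  obtain ⟨⟨j, m⟩, rfl⟩ := hx
  refine ⟨j, ?_⟩
  suffices ∃ w ∈ D, w ≠ Sum.inr (Sum.inr ⟨j, m⟩) ∧ block w = some j by
    obtain ⟨w, hwD, hne, hw⟩ := this
    rw [← ncard_pair hne]
    exact ncard_le_ncard <|
      insert_subset_iff.2 ⟨⟨hwD, hw⟩, singleton_subset_iff.2 ⟨hxD, rfl⟩⟩
  by_cases hv : Sum.inr (Sum.inl j) ∈ D
  · exact ⟨_, hv, by simp, rfl⟩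
  -- the other leaves `x_{j,m'}` of the star can only be dominated by themselves
  have : Nontrivial (Fin (i j)) := Fin.nontrivial_iff_two_le.2 (hi j)
  obtain ⟨m', hm'⟩ := exists_ne m
  refine ⟨Sum.inr (Sum.inr ⟨j, m'⟩), ?_, by simpa using hm', rfl⟩
  by_contra hx'
  obtain ⟨w, hwD, hw⟩ := hD.exists_adj_mem one_ne_zero hx'
  rw [← SimpleGraph.mem_neighborSet, neighborSet_inr_inr] at hw
  rcases hw with rfl | ⟨c, rfl⟩
  exacts [hv hwD, hCD c hwD]

theorem add_one_le_ncard_of_isKDomSet_one (hk : 2 ≤ k) (hi : ∀ j, 2 ≤ i j)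
    {D : Set (Vert k r i)} (hD : IsKDomSet (SGraph k r i) 1 D) : r + 1 ≤ D.ncard := by
  have hblocks := one_le_ncard_inter_block hD one_ne_zero
  rw [ncard_eq_centers_add_sum_blocks]
  rcases (D ∩ range Sum.inl).eq_empty_or_nonempty with hC | hC
  · obtain ⟨j, hj⟩ := exists_two_le_ncard_inter_block hk hi hD hC
    have := Fintype.card_sub_one_add_le_sum hblocks hj
    simp only [Fintype.card_fin] at this
    omega
  · have hsum : r ≤ ∑ j, (D ∩ block ⁻¹' {some j}).ncard := by
      simpa using Finset.sum_le_sum fun j (_ : j ∈ Finset.univ) => hblocks j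
    have := (ncard_pos (toFinite _)).2 hC
    omega

theorem kdomNum_one_eq (hk : 2 ≤ k) (hr : 1 ≤ r) (hi : ∀ j, 2 ≤ i j) :
    kdomNum (SGraph k r i) 1 = r + 1 :=
  kdomNum_eq_of_isKDomSet (isKDomSet_one_insert_hubs hr (by have := hi ⟨0, hr⟩; omega))
    (ncard_insert_hubs hr _) fun _ hD => add_one_le_ncard_of_isKDomSet_one hk hi hD

end SGraph

/-- For all `k ≥ 2`, `r ≥ 1` and `i_j ≥ k`, the graph `G = S_k(i_1, …, i_r)`
satisfies `γ_k(G) = r + k − 1` and `γ(G) = r + 1`; in particular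
`γ_k(G) = γ(G) + k − 2`. -/
theorem statement14 (k r : ℕ) (hk : 2 ≤ k) (hr : 1 ≤ r)
    (i : Fin r → ℕ) (hi : ∀ j, k ≤ i j) :
    kdomNum (SGraph k r i) k = r + k - 1 ∧
    kdomNum (SGraph k r i) 1 = r + 1 ∧
    kdomNum (SGraph k r i) k = kdomNum (SGraph k r i) 1 + (k - 2) := by
  have hγk := SGraph.kdomNum_self_eq hk hr hi
  have hγ1 := SGraph.kdomNum_one_eq hk hr fun j => hk.trans (hi j)
  exact ⟨hγk, hγ1, by omega⟩
end
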